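/- arXiv:1908.08895 — 4 statements merged into one kernel-verified Lean document; each statement's English description precedes it below -/
import Mathlib

section
/- Let k be a field and R = k⟦t⟧. The ring A = k⟦x,y⟧/(xy), viewed as an R-algebra via t ↦ x + y, is a free R-module of rank 2 with basis {1, x}. -/
/-- The ideal `(xy)` of `k⟦x,y⟧`. -/
noncomputable def nodalIdeal (k : Type) [Field k] : Ideal (MvPowerSeries (Fin 2) k) :=
  Ideal.span {(MvPowerSeries.X (0 : Fin 2) : MvPowerSeries (Fin 2) k) *
    MvPowerSeries.X (1 : Fin 2)}

/-- The nodal curve singularity `k⟦x,y⟧/(xy)`. -/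
abbrev Nodal (k : Type) [Field k] : Type :=
  MvPowerSeries (Fin 2) k ⧸ nodalIdeal k

noncomputable def nodalX (k : Type) [Field k] (j : Fin 2) : Nodal k :=
  Ideal.Quotient.mk (nodalIdeal k) (MvPowerSeries.X j)

/-! A power series in `x, y` is determined modulo `xy` by its restrictions to the two axes,
i.e. `k⟦x,y⟧/(xy)` is the fibre product `k⟦x⟧ ×_k k⟦y⟧`, and `t ↦ x + y` becomes the diagonal
`p ↦ (p(x), p(y))`. In these terms `a + b x` is the pair `(a + t b, a)`, so `a` is read off the
second branch and `b` is the difference of the two branches divided by `t`. -/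

namespace MvPowerSeries

variable {σ R : Type*} [CommSemiring R]

/-- Substitution of `0` for every variable other than `X i`. -/
noncomputable def restrictToAxis (i : σ) : MvPowerSeries σ R →ₐ[R] PowerSeries R where
  toFun F := PowerSeries.mk fun n => coeff (Finsupp.single i n) F
  map_one' := by classical ext n; simp [coeff_one, PowerSeries.coeff_one]
  map_mul' F G := by
    classical
    ext n
    simp only [PowerSeries.coeff_mk, PowerSeries.coeff_mul, coeff_mul,
      Finsupp.antidiagonal_single, Finset.sum_map]
    rfl
  map_zero' := by ext; simp
  map_add' F G := by ext; simp
  commutes' c := by classical ext n; simp [algebraMap_apply, coeff_C, PowerSeries.coeff_C]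

@[simp]
theorem coeff_restrictToAxis (i : σ) (F : MvPowerSeries σ R) (n : ℕ) :
    PowerSeries.coeff n (restrictToAxis i F) = coeff (Finsupp.single i n) F :=
  PowerSeries.coeff_mk n fun n => coeff (Finsupp.single i n) F

@[simp]
theorem constantCoeff_restrictToAxis (i : σ) (F : MvPowerSeries σ R) :
    PowerSeries.constantCoeff (restrictToAxis i F) = constantCoeff F := by
  rw [← PowerSeries.coeff_zero_eq_constantCoeff_apply, coeff_restrictToAxis, Finsupp.single_zero,
    coeff_zero_eq_constantCoeff_apply]

@[simp]
theorem restrictToAxis_X_self (i : σ) :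
    restrictToAxis i (X i : MvPowerSeries σ R) = PowerSeries.X := by
  classical
  ext n
  simp [coeff_X, PowerSeries.coeff_X, Finsupp.single_eq_single_iff]

theorem restrictToAxis_X_of_ne {i j : σ} (h : j ≠ i) :
    restrictToAxis i (X j : MvPowerSeries σ R) = 0 := by
  classical
  ext n
  simp [coeff_X, Finsupp.single_eq_single_iff, h.symm]

open Classical in
/-- Coefficient `p_n` at every `x_i ^ n`, and `0` at every mixed monomial. -/
noncomputable def axisLift (p : PowerSeries R) : MvPowerSeries σ R :=
  fun m => if ∃ i n, m = Finsupp.single i n then PowerSeries.coeff m.degree p else 0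

@[simp]
theorem restrictToAxis_axisLift (i : σ) (p : PowerSeries R) :
    restrictToAxis i (axisLift p) = p := by
  ext n
  simp [axisLift, coeff_apply]

end MvPowerSeries

open MvPowerSeries

section Nodal

variable (k : Type) [Field k]

theorem mem_nodalIdeal_iff {F : MvPowerSeries (Fin 2) k} :
    F ∈ nodalIdeal k ↔ ∀ i, restrictToAxis i F = 0 := by
  have axis_eq (m : Fin 2 →₀ ℕ) (i j : Fin 2) (hij : i ≠ j) (hm : m j = 0) :
      m = Finsupp.single i (m i) := by
    ext l; fin_cases i <;> fin_cases j <;> fin_cases l <;> simp_all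
  rw [nodalIdeal, Ideal.mem_span_singleton]
  constructor
  · rintro ⟨G, rfl⟩ i
    fin_cases i <;> simp [restrictToAxis_X_of_ne]
  · intro hF
    have hF' (i : Fin 2) (n : ℕ) : coeff (Finsupp.single i n) F = 0 := by
      simpa using congrArg (PowerSeries.coeff n) (hF i)
    obtain ⟨G, rfl⟩ : X 0 ∣ F := X_dvd_iff.2 fun m hm => by
      rw [axis_eq m 1 0 (by decide) hm, hF']
    suffices X 1 ∣ G from mul_dvd_mul_left _ this
    refine X_dvd_iff.2 fun m hm => ?_
    have := hF' 0 (1 + m 0)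
    rwa [Finsupp.single_add, ← axis_eq m 0 1 (by decide) hm, X,
      coeff_add_monomial_mul, one_mul] at this

noncomputable def nodalBranch (i : Fin 2) : Nodal k →ₐ[k] PowerSeries k :=
  Ideal.Quotient.liftₐ (nodalIdeal k) (restrictToAxis i) fun _ hF => (mem_nodalIdeal_iff k).1 hF i

@[simp]
theorem nodalBranch_mk (i : Fin 2) (F : MvPowerSeries (Fin 2) k) :
    nodalBranch k i (Ideal.Quotient.mk (nodalIdeal k) F) = restrictToAxis i F :=
  rfl

theorem nodal_ext {ξ η : Nodal k} (h : ∀ i, nodalBranch k i ξ = nodalBranch k i η) : ξ = η := by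
  obtain ⟨F, rfl⟩ := Ideal.Quotient.mk_surjective ξ
  obtain ⟨G, rfl⟩ := Ideal.Quotient.mk_surjective η
  rw [Ideal.Quotient.eq, mem_nodalIdeal_iff]
  simpa [sub_eq_zero] using h

@[simp]
theorem nodalBranch_nodalX_self (i : Fin 2) : nodalBranch k i (nodalX k i) = PowerSeries.X :=
  restrictToAxis_X_self i

theorem nodalBranch_nodalX_of_ne {i j : Fin 2} (h : j ≠ i) : nodalBranch k i (nodalX k j) = 0 :=
  restrictToAxis_X_of_ne h

theorem constantCoeff_nodalBranch (i j : Fin 2) (ξ : Nodal k) :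
    PowerSeries.constantCoeff (nodalBranch k i ξ) =
      PowerSeries.constantCoeff (nodalBranch k j ξ) := by
  obtain ⟨F, rfl⟩ := Ideal.Quotient.mk_surjective ξ
  simp

noncomputable def nodalAlgHom : PowerSeries k →ₐ[k] Nodal k where
  toFun p := Ideal.Quotient.mk (nodalIdeal k) (axisLift p)
  map_one' := nodal_ext k fun i => by simp
  map_mul' p q := nodal_ext k fun i => by simp
  map_zero' := nodal_ext k fun i => by simp
  map_add' p q := nodal_ext k fun i => by simp
  commutes' c := nodal_ext k fun i => by simp

@[simp]
theorem nodalBranch_nodalAlgHom (i : Fin 2) (p : PowerSeries k) :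
    nodalBranch k i (nodalAlgHom k p) = p :=
  restrictToAxis_axisLift i p

theorem nodalAlgHom_X : nodalAlgHom k PowerSeries.X = nodalX k 0 + nodalX k 1 :=
  nodal_ext k fun i => by fin_cases i <;> simp [nodalBranch_nodalX_of_ne]

noncomputable abbrev nodalModule : Module (PowerSeries k) (Nodal k) :=
  Module.compHom (Nodal k) (nodalAlgHom k).toRingHom

section NodalModule

attribute [local instance] nodalModule

theorem nodal_smul_def (p : PowerSeries k) (ξ : Nodal k) : p • ξ = nodalAlgHom k p * ξ :=
  rfl

theorem linearIndependent_one_nodalX : LinearIndependent (PowerSeries k) ![1, nodalX k 0] := by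
  refine LinearIndependent.pair_iff.2 fun p q h => ?_
  have h₀ := congrArg (nodalBranch k 0) h
  have h₁ := congrArg (nodalBranch k 1) h
  simp only [nodal_smul_def, mul_one, map_add, map_mul, nodalBranch_nodalAlgHom,
    nodalBranch_nodalX_self, nodalBranch_nodalX_of_ne k zero_ne_one,
    map_zero, mul_zero, add_zero] at h₀ h₁
  subst h₁
  simpa [PowerSeries.X_ne_zero] using h₀

theorem span_one_nodalX : Submodule.span (PowerSeries k) {1, nodalX k 0} = ⊤ := by
  refine Submodule.eq_top_iff'.2 fun ξ => Submodule.mem_span_pair.2 ?_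
  obtain ⟨q, hq⟩ : PowerSeries.X ∣ nodalBranch k 0 ξ - nodalBranch k 1 ξ := by
    rw [PowerSeries.X_dvd_iff, map_sub, constantCoeff_nodalBranch k 0 1, sub_self]
  refine ⟨nodalBranch k 1 ξ, q, nodal_ext k fun i => ?_⟩
  fin_cases i
  · simp [nodal_smul_def, mul_comm q, ← hq]
  · simp [nodal_smul_def, nodalBranch_nodalX_of_ne]

noncomputable def nodalBasis : Module.Basis (Fin 2) (PowerSeries k) (Nodal k) :=
  .mk (linearIndependent_one_nodalX k) (by rw [Matrix.range_cons_cons_empty, span_one_nodalX])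

@[simp]
theorem nodalBasis_zero : nodalBasis k 0 = 1 :=
  Module.Basis.mk_apply ..

@[simp]
theorem nodalBasis_one : nodalBasis k 1 = nodalX k 0 :=
  Module.Basis.mk_apply ..

end NodalModule

end Nodal

theorem stmt6 (k : Type) [Field k] :
    ∃ f : PowerSeries k →ₐ[k] Nodal k,
      f PowerSeries.X = nodalX k 0 + nodalX k 1 ∧
      letI : Module (PowerSeries k) (Nodal k) := Module.compHom (Nodal k) f.toRingHom
      ∃ b : Module.Basis (Fin 2) (PowerSeries k) (Nodal k),
        b 0 = 1 ∧ b 1 = nodalX k 0 :=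
  ⟨nodalAlgHom k, nodalAlgHom_X k, nodalBasis k, nodalBasis_zero k, nodalBasis_one k⟩
end

section
/- Let k be a field and A = k⟦x,y⟧/(xy). The k-linear involution ν of A fixing k, with ν(x) = x and ν(y) = y determined by the polarization ε(x) = +, ε(y) = − (namely ν(x) = ε(x)²·x = x and ν(y) = ε(y)²·y = y), is the identity map on A. Consequently A is a symmetric R-algebra, where R = k⟦t⟧ acts via t ↦ x + y: there is an isomorphism A ≅ Hom_R(A, R) of A-bimodules. -/
namespace Module.Basis

variable {R A : Type*} [CommRing R]

section Ring

variable [Ring A] [Algebra R A]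

lemma coord_one_eq_zero_of_fin_two (b : Basis (Fin 2) R A) (hb : b 0 = 1) : b.coord 1 1 = 0 := by
  rw [← hb, coord_apply, repr_self, Finsupp.single_eq_of_ne (by decide)]

/- On the basis `1, e` the pairing `(w, z) ↦ coord₁ (w * z)` has Gram matrix `[[0, 1], [1, d]]`
with `d = coord₁ (e * e)`, whose inverse gives the formula for the inverse map. -/
noncomputable def coordMulEquiv (b : Basis (Fin 2) R A) (hb : b 0 = 1) :
    A ≃ₗ[R] (A →ₗ[R] R) :=
  LinearEquiv.ofLinearMap ((LinearMap.mul R A).compr₂ (b.coord 1))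
    (LinearMap.smulRight (LinearMap.applyₗ (b 1) - b.coord 1 (b 1 * b 1) • LinearMap.applyₗ 1 :
        (A →ₗ[R] R) →ₗ[R] R) 1 +
      LinearMap.smulRight (LinearMap.applyₗ 1 : (A →ₗ[R] R) →ₗ[R] R) (b 1))
    (LinearMap.ext fun φ => b.ext fun i => by
      fin_cases i
      · simp [hb, coord_one_eq_zero_of_fin_two b hb]
      · simp
        ring)
    (b.ext fun i => by
      fin_cases i
      · simp [hb, coord_one_eq_zero_of_fin_two b hb]
      · simp)

lemma coordMulEquiv_apply (b : Basis (Fin 2) R A) (hb : b 0 = 1) (w z : A) :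
    b.coordMulEquiv hb w z = b.coord 1 (w * z) := rfl

end Ring

theorem exists_linearEquiv_dual_symmetric_of_fin_two [CommRing A] [Algebra R A]
    (b : Basis (Fin 2) R A) (hb : b 0 = 1) :
    ∃ θ : A ≃ₗ[R] (A →ₗ[R] R), ∀ a c w z : A, θ (a * w * c) z = θ w (c * z * a) :=
  ⟨b.coordMulEquiv hb, fun a c w z => by
    simp only [coordMulEquiv_apply]
    ring_nf⟩

end Module.Basis

lemma Finsupp.eq_single_one_of_apply_zero {m : Fin 2 →₀ ℕ} (hm : m 0 = 0) :
    m = single 1 (m 1) := by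
  ext i; fin_cases i <;> simp [hm]

lemma Finsupp.eq_single_zero_of_apply_one {m : Fin 2 →₀ ℕ} (hm : m 1 = 0) :
    m = single 0 (m 0) := by
  ext i; fin_cases i <;> simp [hm]

namespace Nodal

open MvPowerSeries

variable {k : Type} [Field k]

lemma mem_nodalIdeal_of_coeff_single_eq_zero {φ : MvPowerSeries (Fin 2) k}
    (h : ∀ j n, coeff (Finsupp.single j n) φ = 0) : φ ∈ nodalIdeal k := by
  obtain ⟨ψ, rfl⟩ : X 0 ∣ φ := X_dvd_iff.2 fun m hm => by
    rw [Finsupp.eq_single_one_of_apply_zero hm]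
    exact h 1 _
  obtain ⟨χ, rfl⟩ : X 1 ∣ ψ := X_dvd_iff.2 fun m hm => by
    have := h 0 (m 0 + 1)
    rwa [Finsupp.single_add, add_comm, ← Finsupp.eq_single_zero_of_apply_one hm, X_def,
      coeff_add_monomial_mul, one_mul] at this
  exact Ideal.mem_span_singleton.2 ⟨χ, (mul_assoc _ _ _).symm⟩

variable (k) in
noncomputable def branch (j : Fin 2) : MvPowerSeries (Fin 2) k →ₐ[k] PowerSeries k :=
  killCompl (Function.Embedding.punit j)

lemma coeff_branch (j : Fin 2) (φ : MvPowerSeries (Fin 2) k) (n : ℕ) :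
    PowerSeries.coeff n (branch k j φ) = coeff (Finsupp.single j n) φ := by
  rw [PowerSeries.coeff, branch, coeff_killCompl, Finsupp.embDomain_single]
  rfl

lemma branch_X_self (j : Fin 2) : branch k j (X j) = PowerSeries.X :=
  killCompl_X (e := Function.Embedding.punit j) PUnit.unit

lemma branch_X_of_ne {i j : Fin 2} (h : i ≠ j) : branch k j (X i) = 0 :=
  killCompl_X_eq_zero (by rintro ⟨_, rfl⟩; exact h rfl)

lemma constantCoeff_branch (j : Fin 2) (φ : MvPowerSeries (Fin 2) k) :
    PowerSeries.constantCoeff (branch k j φ) = constantCoeff φ := by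
  rw [← PowerSeries.coeff_zero_eq_constantCoeff_apply, coeff_branch, Finsupp.single_zero,
    coeff_zero_eq_constantCoeff_apply]

lemma branch_subst_X_add_X (j : Fin 2) (r : PowerSeries k) :
    branch k j (r.subst (X 0 + X 1)) = r := by
  ext n
  rw [coeff_branch, PowerSeries.coeff_subst_X_zero_add_X_one]
  fin_cases j <;> simp

variable (k) in
noncomputable def normalization : Nodal k →ₐ[k] PowerSeries k × PowerSeries k :=
  Ideal.Quotient.liftₐ (nodalIdeal k) ((branch k 0).prod (branch k 1)) fun φ hφ => by
    obtain ⟨ψ, rfl⟩ := Ideal.mem_span_singleton.1 hφ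
    simp [branch_X_self, branch_X_of_ne]

lemma normalization_mk (φ : MvPowerSeries (Fin 2) k) :
    normalization k (Ideal.Quotient.mk _ φ) = (branch k 0 φ, branch k 1 φ) := rfl

lemma normalization_injective : Function.Injective (normalization k) := by
  refine (injective_iff_map_eq_zero _).2 fun w hw => ?_
  obtain ⟨φ, rfl⟩ := Ideal.Quotient.mk_surjective w
  rw [normalization_mk, Prod.mk_eq_zero] at hw
  refine Ideal.Quotient.eq_zero_iff_mem.2 (mem_nodalIdeal_of_coeff_single_eq_zero fun j n => ?_)
  rw [← coeff_branch]
  fin_cases j <;> simp [hw.1, hw.2]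

lemma normalization_nodalX_zero : normalization k (nodalX k 0) = (PowerSeries.X, 0) := by
  rw [nodalX, normalization_mk, branch_X_self, branch_X_of_ne zero_ne_one]

variable (k) in
noncomputable def ofPowerSeries : PowerSeries k →ₐ[k] Nodal k :=
  (Ideal.Quotient.mkₐ k (nodalIdeal k)).comp
    (PowerSeries.substAlgHom (PowerSeries.HasSubst.of_constantCoeff_zero (by simp) :
      PowerSeries.HasSubst (X 0 + X 1 : MvPowerSeries (Fin 2) k)))

lemma ofPowerSeries_X : ofPowerSeries k PowerSeries.X = nodalX k 0 + nodalX k 1 := by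
  simp [ofPowerSeries, PowerSeries.substAlgHom_X, nodalX]

lemma normalization_ofPowerSeries (r : PowerSeries k) :
    normalization k (ofPowerSeries k r) = (r, r) := by
  simp [ofPowerSeries, PowerSeries.coe_substAlgHom, normalization_mk, branch_subst_X_add_X]

lemma exists_ofPowerSeries_add_ofPowerSeries_mul_eq (w : Nodal k) :
    ∃ a b, ofPowerSeries k a + ofPowerSeries k b * nodalX k 0 = w := by
  obtain ⟨φ, rfl⟩ := Ideal.Quotient.mk_surjective w
  obtain ⟨c, hc⟩ : PowerSeries.X ∣ branch k 0 φ - branch k 1 φ := by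
    rw [PowerSeries.X_dvd_iff, map_sub, constantCoeff_branch, constantCoeff_branch, sub_self]
  refine ⟨branch k 1 φ, c, normalization_injective ?_⟩
  simp only [map_add, map_mul, normalization_ofPowerSeries, normalization_nodalX_zero,
    normalization_mk, Prod.mk_mul_mk, Prod.mk_add_mk, mul_zero, add_zero]
  congr 1
  linear_combination -hc

lemma eq_zero_of_ofPowerSeries_add_ofPowerSeries_mul_eq_zero {a b : PowerSeries k}
    (h : ofPowerSeries k a + ofPowerSeries k b * nodalX k 0 = 0) : a = 0 ∧ b = 0 := by
  have := congrArg (normalization k) h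
  simp only [map_add, map_mul, normalization_ofPowerSeries, normalization_nodalX_zero,
    Prod.mk_mul_mk, Prod.mk_add_mk, mul_zero, add_zero, map_zero, Prod.mk_eq_zero] at this
  obtain ⟨hab, rfl⟩ := this
  simpa [PowerSeries.X_ne_zero] using hab

lemma ringHom_eq_id (ν : Nodal k →+* Nodal k)
    (hν : ∀ r, ν (ofPowerSeries k r) = ofPowerSeries k r) (hx : ν (nodalX k 0) = nodalX k 0) :
    ν = RingHom.id (Nodal k) :=
  RingHom.ext fun w => by
    obtain ⟨a, b, rfl⟩ := exists_ofPowerSeries_add_ofPowerSeries_mul_eq w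
    simp [hν, hx]

variable (k) in
noncomputable abbrev algebraPowerSeries : Algebra (PowerSeries k) (Nodal k) :=
  (ofPowerSeries k).toAlgebra

attribute [local instance] algebraPowerSeries

lemma smul_def (r : PowerSeries k) (w : Nodal k) : r • w = ofPowerSeries k r * w := rfl

variable (k) in
noncomputable def basis : Module.Basis (Fin 2) (PowerSeries k) (Nodal k) :=
  .mk (v := ![1, nodalX k 0])
    (LinearIndependent.pair_iff.2 fun _ _ h =>
      eq_zero_of_ofPowerSeries_add_ofPowerSeries_mul_eq_zero (by simpa [smul_def] using h))
    (fun w _ => by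
      obtain ⟨a, b, rfl⟩ := exists_ofPowerSeries_add_ofPowerSeries_mul_eq w
      rw [Matrix.range_cons_cons_empty, Submodule.mem_span_pair]
      exact ⟨a, b, by simp [smul_def]⟩)

lemma basis_zero : basis k 0 = 1 := Module.Basis.mk_apply ..

end Nodal

/-- The involution `ν` of `A = k⟦x,y⟧/(xy)` determined by the polarization `ε(x) = +`,
`ε(y) = −`, i.e. the `R = k⟦t⟧`-algebra endomorphism (where `t` acts by `x + y`) with
`ν(x) = x` and `ν(y) = y`, is the identity map on `A`.  Consequently `A` is a symmetric
`R`-algebra: there is an isomorphism `A ≅ Hom_R(A, R)` of `A`-bimodules. -/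
theorem stmt7 (k : Type) [Field k] :
    ∃ f : PowerSeries k →ₐ[k] Nodal k,
      f PowerSeries.X = nodalX k 0 + nodalX k 1 ∧
      (∀ ν : Nodal k →+* Nodal k, (∀ r : PowerSeries k, ν (f r) = f r) →
        ν (nodalX k 0) = nodalX k 0 → ν (nodalX k 1) = nodalX k 1 →
        ν = RingHom.id (Nodal k)) ∧
      letI : Module (PowerSeries k) (Nodal k) := Module.compHom (Nodal k) f.toRingHom
      ∃ θ : Nodal k ≃ₗ[PowerSeries k] (Nodal k →ₗ[PowerSeries k] PowerSeries k),
        ∀ a b w z : Nodal k, θ (a * w * b) z = θ w (b * z * a) := by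
  refine ⟨Nodal.ofPowerSeries k, Nodal.ofPowerSeries_X,
    fun ν hν hx _ => Nodal.ringHom_eq_id ν hν hx, ?_⟩
  let := Nodal.algebraPowerSeries k
  exact (Nodal.basis k).exists_linearEquiv_dual_symmetric_of_fin_two Nodal.basis_zero
end

section
/- Let S be a commutative ring, m a maximal ideal of S with residue field k = S/m, and A an S-algebra which is a finitely generated free S-module. Set Ā = A/mA and A^∨ = Hom_S(A, S), ω̄ = Hom_k(Ā, k). Then the map φ : Ā ⊗_A A^∨ → ω̄ sending ā ⊗ f to the form x + mA ↦ f(xa) + m is a well-defined isomorphism of (Ā, A)-bimodules. -/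
/-!
A `k`-linear form on `Ā = k ⊗[S] A` is determined by its values on the elements `1 ⊗ x`. Hence the
kernel of `f ↦ f mod m` consists of the forms with values in `m`, which for finite free `A` is
`m • A^∨` (expand `f` in the dual basis), and surjectivity is the lifting property of the
projective module `A` along `S → S/m`.
-/

open scoped TensorProduct

variable (S : Type) [CommRing S] (m : Ideal S)
variable (A : Type) [Ring A] [Algebra S A]

/-- The reduction map `A^∨ = Hom_S(A,S) → ω̄ = Hom_k(Ā,k)`, where `k = S/m` and
`Ā = k ⊗[S] A ≅ A/mA`, sending `f` to the induced form `x̄ ↦ f(x) + m`. -/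
noncomputable def redDual (f : A →ₗ[S] S) :
    ((S ⧸ m) ⊗[S] A) →ₗ[S ⧸ m] (S ⧸ m) :=
  (TensorProduct.AlgebraTensorModule.rid S (S ⧸ m) (S ⧸ m)).toLinearMap ∘ₗ
    f.baseChange (S ⧸ m)

theorem LinearMap.mem_ideal_smul_top_dual_iff {R M : Type*} [CommRing R] [AddCommGroup M]
    [Module R M] [Module.Free R M] [Module.Finite R M] (I : Ideal R) (f : M →ₗ[R] R) :
    f ∈ I • (⊤ : Submodule R (M →ₗ[R] R)) ↔ ∀ x, f x ∈ I := by
  constructor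
  · intro hf x
    refine Submodule.smul_induction_on hf (fun c hc g _ => ?_) (fun g h hg hh => ?_)
    · simpa using I.mul_mem_right (g x) hc
    · simpa using I.add_mem hg hh
  · intro hf
    let b := Module.Free.chooseBasis R M
    rw [← b.sum_dual_apply_smul_coord f]
    exact Submodule.sum_mem _ fun i _ => Submodule.smul_mem_smul (hf (b i)) Submodule.mem_top

theorem redDual_one_tmul (f : A →ₗ[S] S) (x : A) :
    redDual S m A f ((1 : S ⧸ m) ⊗ₜ[S] x) = Ideal.Quotient.mk m (f x) := by
  simp [redDual, Algebra.smul_def]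

theorem redDual_ext {g h : ((S ⧸ m) ⊗[S] A) →ₗ[S ⧸ m] (S ⧸ m)}
    (H : ∀ x : A, g ((1 : S ⧸ m) ⊗ₜ[S] x) = h ((1 : S ⧸ m) ⊗ₜ[S] x)) : g = h :=
  (TensorProduct.isBaseChange S A (S ⧸ m)).algHom_ext g h H

theorem redDual_eq_zero_iff (f : A →ₗ[S] S) : redDual S m A f = 0 ↔ ∀ x, f x ∈ m := by
  refine ⟨fun hf x => ?_, fun hf => redDual_ext S m A fun x => ?_⟩
  · rw [← Ideal.Quotient.eq_zero_iff_mem, ← redDual_one_tmul, hf, LinearMap.zero_apply]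
  · rw [redDual_one_tmul, LinearMap.zero_apply, Ideal.Quotient.eq_zero_iff_mem]
    exact hf x

theorem redDual_surjective [Module.Projective S A] : Function.Surjective (redDual S m A) := by
  intro g
  obtain ⟨f, hf⟩ := Module.projective_lifting_property (Ideal.Quotient.mkₐ S m).toLinearMap
    ((g.restrictScalars S) ∘ₗ TensorProduct.mk S (S ⧸ m) A 1) Ideal.Quotient.mk_surjective
  exact ⟨f, redDual_ext S m A fun x => by
    simpa [redDual_one_tmul] using LinearMap.congr_fun hf x⟩

theorem redDual_comp_mulLeft_comp_mulRight (f : A →ₗ[S] S) (a b : A) :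
    redDual S m A (f ∘ₗ LinearMap.mulLeft S b ∘ₗ LinearMap.mulRight S a) =
      redDual S m A f ∘ₗ
        LinearMap.mulLeft (S ⧸ m) (Algebra.TensorProduct.includeRight (R := S) b) ∘ₗ
        LinearMap.mulRight (S ⧸ m) (Algebra.TensorProduct.includeRight (R := S) a) :=
  redDual_ext S m A fun x => by
    simp only [LinearMap.comp_apply, LinearMap.mulLeft_apply, LinearMap.mulRight_apply,
      Algebra.TensorProduct.includeRight_apply, redDual_one_tmul,
      Algebra.TensorProduct.tmul_mul_tmul, mul_one]

theorem stmt9 [Module.Free S A] [Module.Finite S A] :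
    (∀ (f : A →ₗ[S] S) (x : A),
      redDual S m A f ((1 : S ⧸ m) ⊗ₜ[S] x) = Ideal.Quotient.mk m (f x)) ∧
    Function.Surjective (redDual S m A) ∧
    (∀ f : A →ₗ[S] S,
      redDual S m A f = 0 ↔ f ∈ m • (⊤ : Submodule S (A →ₗ[S] S))) ∧
    ∀ (f : A →ₗ[S] S) (a b : A),
      redDual S m A (f ∘ₗ LinearMap.mulLeft S b ∘ₗ LinearMap.mulRight S a) =
        redDual S m A f ∘ₗ
          LinearMap.mulLeft (S ⧸ m)
            (Algebra.TensorProduct.includeRight (R := S) (A := S ⧸ m) (B := A) b) ∘ₗ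
          LinearMap.mulRight (S ⧸ m)
            (Algebra.TensorProduct.includeRight (R := S) (A := S ⧸ m) (B := A) a) :=
  ⟨redDual_one_tmul S m A, redDual_surjective S m A,
    fun f => (redDual_eq_zero_iff S m A f).trans (LinearMap.mem_ideal_smul_top_dual_iff m f).symm,
    redDual_comp_mulLeft_comp_mulRight S m A⟩
end

section
/- Let S be a commutative ring, m a maximal ideal with residue field k, and A an S-algebra which is a finitely generated free S-module. If A is symmetric over S, i.e. Hom_S(A, S) ≅ A as A-bimodules, then Ā = A/mA is symmetric over k, i.e. Hom_k(Ā, k) ≅ Ā as Ā-bimodules. -/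
/-!
A bimodule map `θ : A → Hom_S(A, S)` is the same as a form `θ x z = t (z * x)` whose trace form
`t = θ 1` is symmetric, `t (u * v) = t (v * u)`. Both identities are multilinear, so they survive
base change to `k`, and since `A` is finite free, `k ⊗ Hom_S(A, S) ≅ Hom_k(k ⊗ A, k)`.
-/

open Module
open scoped TensorProduct

/-- `Dual S A` carries the `A`-bimodule structure `(a • f • b) z = f (b * z * a)`. -/
def IsBimoduleHomToDual {S A : Type*} [CommSemiring S] [Semiring A] [Algebra S A]
    (θ : A →ₗ[S] Dual S A) : Prop :=
  ∀ a b x z : A, θ (a * x * b) z = θ x (b * z * a)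

section

variable {S A : Type*} [CommSemiring S] [Semiring A] [Algebra S A]

theorem isBimoduleHomToDual_iff (θ : A →ₗ[S] Dual S A) :
    IsBimoduleHomToDual θ ↔
      (∀ x z : A, θ x z = θ 1 (z * x)) ∧ ∀ u v : A, θ 1 (u * v) = θ 1 (v * u) := by
  refine ⟨fun h ↦ ⟨fun x z ↦ ?_, fun u v ↦ ?_⟩, fun ⟨hθ, htr⟩ a b x z ↦ ?_⟩
  · simpa using h x 1 1 z
  · have hleft := h u 1 1 v
    have hright := h 1 u 1 v
    simp only [mul_one, one_mul] at hleft hright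
    rw [← hleft, hright]
  · rw [hθ, hθ x, ← mul_assoc, htr, ← mul_assoc, ← mul_assoc]

variable (k : Type*) [CommSemiring k] [Algebra S k] [Free S A] [Module.Finite S A]

noncomputable def dualBaseChange (θ : A ≃ₗ[S] Dual S A) :
    k ⊗[S] A ≃ₗ[k] Dual k (k ⊗[S] A) :=
  (θ.baseChange S k A _).trans (TensorProduct.isBaseChange S A k).toDualBaseChange

theorem dualBaseChange_tmul_tmul (θ : A ≃ₗ[S] Dual S A) (c d : k) (x z : A) :
    dualBaseChange k θ (c ⊗ₜ x) (d ⊗ₜ z) = c * d * algebraMap S k (θ x z) := by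
  have h := (TensorProduct.isBaseChange S A k).toDualBaseChange_tmul c (θ x) z
  rw [TensorProduct.mk_apply] at h
  rw [← mul_one d, ← smul_eq_mul, ← TensorProduct.smul_tmul', map_smul, dualBaseChange,
    LinearEquiv.trans_apply, LinearEquiv.baseChange_tmul, h, smul_eq_mul]
  ring

theorem IsBimoduleHomToDual.dualBaseChange {θ : A ≃ₗ[S] Dual S A}
    (h : IsBimoduleHomToDual θ.toLinearMap) :
    IsBimoduleHomToDual (dualBaseChange k θ).toLinearMap := by
  rw [isBimoduleHomToDual_iff] at h ⊢
  obtain ⟨hθ, htr⟩ := h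
  simp only [LinearEquiv.coe_coe] at hθ htr ⊢
  constructor
  · intro x z
    induction x using TensorProduct.induction_on with
    | zero => simp
    | add x y hx hy => simp only [map_add, LinearMap.add_apply, mul_add, hx, hy]
    | tmul c x =>
      induction z using TensorProduct.induction_on with
      | zero => simp
      | add z w hz hw => simp only [map_add, add_mul, hz, hw]
      | tmul d z =>
        simp only [Algebra.TensorProduct.one_def, Algebra.TensorProduct.tmul_mul_tmul,
          dualBaseChange_tmul_tmul, hθ x z]
        ring
  · intro u v
    induction u using TensorProduct.induction_on with
    | zero => simp
    | add u w hu hw => simp only [map_add, add_mul, mul_add, hu, hw]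
    | tmul c u =>
      induction v using TensorProduct.induction_on with
      | zero => simp
      | add v w hv hw => simp only [map_add, add_mul, mul_add, hv, hw]
      | tmul d v =>
        simp only [Algebra.TensorProduct.one_def, Algebra.TensorProduct.tmul_mul_tmul,
          dualBaseChange_tmul_tmul, htr u v]
        ring

end

theorem stmt10_general (S : Type) [CommRing S] (m : Ideal S)
    (A : Type) [Ring A] [Algebra S A] [Module.Free S A] [Module.Finite S A]
    (h : ∃ θ : A ≃ₗ[S] (A →ₗ[S] S),
      ∀ a b x z : A, θ (a * x * b) z = θ x (b * z * a)) :
    ∃ θ' : ((S ⧸ m) ⊗[S] A) ≃ₗ[S ⧸ m] (((S ⧸ m) ⊗[S] A) →ₗ[S ⧸ m] (S ⧸ m)),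
      ∀ a b x z : (S ⧸ m) ⊗[S] A, θ' (a * x * b) z = θ' x (b * z * a) := by
  obtain ⟨θ, hθ⟩ := h
  exact ⟨dualBaseChange (S ⧸ m) θ, IsBimoduleHomToDual.dualBaseChange (S ⧸ m) hθ⟩

/-- If `A` is an `S`-algebra, finitely generated free as an `S`-module, and `A` is
symmetric over `S` (i.e. `Hom_S(A,S) ≅ A` as `A`-bimodules), then for any maximal ideal
`m ⊆ S` with residue field `k = S/m`, the quotient `Ā = k ⊗[S] A ≅ A/mA` is symmetric
over `k` (i.e. `Hom_k(Ā,k) ≅ Ā` as `Ā`-bimodules). -/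
theorem stmt10 (S : Type) [CommRing S] (m : Ideal S) [m.IsMaximal]
    (A : Type) [Ring A] [Algebra S A] [Module.Free S A] [Module.Finite S A]
    (h : ∃ θ : A ≃ₗ[S] (A →ₗ[S] S),
      ∀ a b x z : A, θ (a * x * b) z = θ x (b * z * a)) :
    ∃ θ' : ((S ⧸ m) ⊗[S] A) ≃ₗ[S ⧸ m] (((S ⧸ m) ⊗[S] A) →ₗ[S ⧸ m] (S ⧸ m)),
      ∀ a b x z : (S ⧸ m) ⊗[S] A, θ' (a * x * b) z = θ' x (b * z * a) :=
  stmt10_general S m A h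
end
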